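/- Let V be a finite-dimensional real vector space and B ∈ Λ²V* a real alternating bilinear form. Define e^B : 𝕋_ℂV → 𝕋_ℂV by e^B(X + ξ) = X + ξ + B̃(X, ·), where B̃ is the ℂ-bilinear extension of B. Then e^B preserves the pairing of 𝕋_ℂV and commutes with conjugation; consequently, if L ⊆ 𝕋_ℂV is lagrangian then e^B(L) is lagrangian with pr_{V_ℂ}(e^B L) = pr_{V_ℂ}(L), the real part of e^B L ∩ conj(e^B L) equals e^B(K) for K the real part of L ∩ L̄, and e^B L has the same real index, order, and type as L; moreover ε(e^B L) = ε(L) + B̃|_E, so Im(ε|_{Δ×Δ}) is also unchanged. -/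

import Mathlib

/-! `e^B` is invertible with inverse `e^{-B}`. Since `B̃` is skew, `e^B` is an isometry of the
pairing, so it maps `L^⊥` onto `(e^B L)^⊥`; since `B` is real, it commutes with conjugation, so it
maps `L ∩ L̄` isomorphically onto `e^B L ∩ conj(e^B L)`, and on the real points it restricts to the
real `e^B`. Finally `e^B` does not move the `V_ℂ`-component, so `E`, and with it the order and the
type, are unchanged. -/

open TensorProduct Module

noncomputable section

namespace CDirac


/-- The real generalized tangent space `V ⊕ V*`. -/
abbrev TR (V : Type*) [AddCommGroup V] [Module ℝ V] := V × (V →ₗ[ℝ] ℝ)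

variable {V : Type*} [AddCommGroup V] [Module ℝ V]

/-- The canonical pairing `⟨X+ξ, Y+η⟩ = (η X + ξ Y)/2` on `𝕋V`. -/
def pairR (a b : TR V) : ℝ := (b.2 a.1 + a.2 b.1) / 2

lemma pairR_add_left (a a' b : TR V) : pairR (a + a') b = pairR a b + pairR a' b := by
  simp only [pairR, Prod.fst_add, Prod.snd_add, map_add, LinearMap.add_apply]
  ring

lemma pairR_smul_left (c : ℝ) (a b : TR V) : pairR (c • a) b = c * pairR a b := by
  simp only [pairR, Prod.smul_fst, Prod.smul_snd, map_smul, LinearMap.smul_apply,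
    smul_eq_mul]
  ring

/-- Orthogonal complement with respect to the pairing on `𝕋V`. -/
def orthR (L : Submodule ℝ (TR V)) : Submodule ℝ (TR V) where
  carrier := {a | ∀ b ∈ L, pairR a b = 0}
  zero_mem' := fun b _ => by simp [pairR]
  add_mem' := fun {a a'} ha ha' b hb => by
    rw [pairR_add_left, ha b hb, ha' b hb, add_zero]
  smul_mem' := fun c a ha b hb => by rw [pairR_smul_left, ha b hb, mul_zero]

/-- A real lagrangian subspace: `L = L^⊥`. -/
def IsLagrangianR (L : Submodule ℝ (TR V)) : Prop := L = orthR L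

/-- An isotropic subspace of `𝕋V`. -/
def IsIsotropicR (K : Submodule ℝ (TR V)) : Prop := ∀ a ∈ K, ∀ b ∈ K, pairR a b = 0

instance (K : Submodule ℝ (TR V)) : AddCommGroup ↥K := Submodule.addCommGroup K

/-- The quotient `K^⊥/K`. -/
abbrev quotK (K : Submodule ℝ (TR V)) := ↥(orthR K) ⧸ (K.comap (orthR K).subtype)

/-- The quotient map `K^⊥ → K^⊥/K`. -/
def mkK (K : Submodule ℝ (TR V)) : ↥(orthR K) →ₗ[ℝ] quotK K :=
  (K.comap (orthR K).subtype).mkQ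




/-- The complexification `V_ℂ = ℂ ⊗_ℝ V`. -/
abbrev Cx (V : Type*) [AddCommGroup V] [Module ℝ V] := ℂ ⊗[ℝ] V

/-- The complex dual `(V_ℂ)^*`. -/
abbrev DualC (V : Type*) [AddCommGroup V] [Module ℝ V] := Cx V →ₗ[ℂ] ℂ

/-- The complexified generalized tangent space `𝕋_ℂ V = V_ℂ ⊕ (V_ℂ)^*`. -/
abbrev TCx (V : Type*) [AddCommGroup V] [Module ℝ V] := Cx V × DualC V

/-- The ℂ-bilinear pairing on `𝕋_ℂ V`. -/
def pairC (a b : TCx V) : ℂ := (b.2 a.1 + a.2 b.1) / 2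

lemma pairC_add_left (a a' b : TCx V) : pairC (a + a') b = pairC a b + pairC a' b := by
  simp only [pairC, Prod.fst_add, Prod.snd_add, map_add, LinearMap.add_apply]
  ring

lemma pairC_smul_left (c : ℂ) (a b : TCx V) : pairC (c • a) b = c * pairC a b := by
  simp only [pairC, Prod.smul_fst, Prod.smul_snd, map_smul, LinearMap.smul_apply,
    smul_eq_mul]
  ring

/-- Orthogonal complement with respect to the ℂ-bilinear pairing on `𝕋_ℂ V`. -/
def orthC (L : Submodule ℂ (TCx V)) : Submodule ℂ (TCx V) where
  carrier := {a | ∀ b ∈ L, pairC a b = 0}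
  zero_mem' := fun b _ => by simp [pairC]
  add_mem' := fun {a a'} ha ha' b hb => by
    rw [pairC_add_left, ha b hb, ha' b hb, add_zero]
  smul_mem' := fun c a ha b hb => by rw [pairC_smul_left, ha b hb, mul_zero]

/-- A complex lagrangian subspace: `L = L^⊥`. -/
def IsLagrangianC (L : Submodule ℂ (TCx V)) : Prop := L = orthC L

private lemma conjCxAux_smul (z : ℂ) (x : Cx V) :
    TensorProduct.map Complex.conjAe.toLinearMap LinearMap.id (z • x) =
      starRingEnd ℂ z • TensorProduct.map Complex.conjAe.toLinearMap LinearMap.id x := by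
  induction x using TensorProduct.induction_on with
  | zero => simp
  | tmul w v => simp [smul_tmul', smul_eq_mul, Complex.conjAe_coe, map_mul]
  | add x y hx hy => simp only [smul_add, map_add, hx, hy]

/-- Conjugation on `V_ℂ`, as a `conj`-semilinear map. -/
def conjCx : Cx V →ₛₗ[starRingEnd ℂ] Cx V where
  toFun := TensorProduct.map Complex.conjAe.toLinearMap LinearMap.id
  map_add' := map_add _
  map_smul' := conjCxAux_smul

lemma conjCx_smul (z : ℂ) (x : Cx V) :
    conjCx (z • x) = starRingEnd ℂ z • conjCx x := conjCxAux_smul z x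

/-- Conjugation of a complex linear functional. -/
def conjDualFun (ξ : DualC V) : DualC V where
  toFun x := starRingEnd ℂ (ξ (conjCx x))
  map_add' x y := by simp
  map_smul' z x := by
    rw [conjCx_smul, map_smul, smul_eq_mul, map_mul, RingHom.id_apply]
    simp [smul_eq_mul]

/-- Conjugation on `(V_ℂ)^*`, as a `conj`-semilinear map. -/
def conjDual : DualC V →ₛₗ[starRingEnd ℂ] DualC V where
  toFun := conjDualFun
  map_add' ξ η := by ext x; simp [conjDualFun]
  map_smul' z ξ := by
    ext x
    simp [conjDualFun, smul_eq_mul, map_mul]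

/-- Conjugation on `𝕋_ℂ V`, as a `conj`-semilinear map. -/
def conjT : TCx V →ₛₗ[starRingEnd ℂ] TCx V where
  toFun a := (conjCx a.1, conjDual a.2)
  map_add' a b := by simp [Prod.ext_iff]
  map_smul' z a := by
    simp [Prod.ext_iff, Prod.smul_fst, Prod.smul_snd, map_smulₛₗ]

instance : RingHomSurjective (starRingEnd ℂ) :=
  ⟨fun z => ⟨starRingEnd ℂ z, by simp⟩⟩

/-- The conjugate `L̄` of a ℂ-subspace of `𝕋_ℂ V`. -/
def conjSub (L : Submodule ℂ (TCx V)) : Submodule ℂ (TCx V) := L.map conjT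

/-- The conjugate `Ē` of a ℂ-subspace of `V_ℂ`. -/
def conjE (E : Submodule ℂ (Cx V)) : Submodule ℂ (Cx V) := E.map conjCx

/-- The canonical inclusion `V → V_ℂ`, `v ↦ 1 ⊗ v`. -/
def iV : V →ₗ[ℝ] Cx V := TensorProduct.mk ℝ ℂ V 1





/-- ℝ-linear auxiliary version of the ℂ-linear extension of a real functional. -/
def dualExtAux (α : V →ₗ[ℝ] ℝ) : Cx V →ₗ[ℝ] ℂ :=
  TensorProduct.lift
    (LinearMap.mk₂ ℝ (fun z v => z * (α v : ℂ))
      (fun z w v => by push_cast; ring)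
      (fun r z v => by simp only [Complex.real_smul]; ring)
      (fun z v w => by push_cast [map_add]; ring)
      (fun r z v => by simp only [map_smul, smul_eq_mul, Complex.real_smul]; push_cast; ring))

private lemma dualExtAux_smulC (α : V →ₗ[ℝ] ℝ) (z : ℂ) (x : Cx V) :
    dualExtAux α (z • x) = z * dualExtAux α x := by
  induction x using TensorProduct.induction_on with
  | zero => simp
  | tmul w v =>
      simp only [dualExtAux, smul_tmul', lift.tmul, LinearMap.mk₂_apply, smul_eq_mul]
      ring
  | add x y hx hy => simp only [smul_add, map_add, hx, hy]; ring

/-- The ℂ-linear extension of a real functional `α : V → ℝ` to `V_ℂ`. -/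
def dualExtFun (α : V →ₗ[ℝ] ℝ) : DualC V where
  toFun := dualExtAux α
  map_add' := map_add _
  map_smul' z x := by simpa using dualExtAux_smulC α z x

private lemma dualExtFun_tmul (α : V →ₗ[ℝ] ℝ) (z : ℂ) (v : V) :
    dualExtFun α (z ⊗ₜ[ℝ] v) = z * (α v : ℂ) := by
  simp [dualExtFun, dualExtAux]

/-- The ℂ-linear extension map `V^* → (V_ℂ)^*`, as an ℝ-linear map. -/
def dualExt : (V →ₗ[ℝ] ℝ) →ₗ[ℝ] DualC V where
  toFun := dualExtFun
  map_add' α β := by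
    apply LinearMap.ext; intro x
    induction x using TensorProduct.induction_on with
    | zero => simp
    | tmul w v =>
        simp only [dualExtFun_tmul, LinearMap.add_apply]
        push_cast
        ring
    | add x y hx hy =>
        simp only [map_add, LinearMap.add_apply] at *
        rw [hx, hy]
  map_smul' r α := by
    apply LinearMap.ext; intro x
    induction x using TensorProduct.induction_on with
    | zero => simp
    | tmul w v =>
        simp only [dualExtFun_tmul, RingHom.id_apply, LinearMap.smul_apply,
          LinearMap.smul_apply, smul_eq_mul, Complex.real_smul]
        push_cast
        ring
    | add x y hx hy =>
        simp only [map_add, RingHom.id_apply, LinearMap.smul_apply, smul_eq_mul] at *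
        rw [hx, hy]

/-- The canonical inclusion `𝕋V → 𝕋_ℂV`. -/
def iT : TR V →ₗ[ℝ] TCx V where
  toFun a := (iV a.1, dualExt a.2)
  map_add' a b := by simp [Prod.ext_iff]
  map_smul' r a := by simp [Prod.ext_iff]



/-- Auxiliary ℝ-linear version of the ℂ-bilinear extension of a real bilinear form. -/
def bilinExtAux (B : V →ₗ[ℝ] V →ₗ[ℝ] ℝ) : Cx V →ₗ[ℝ] DualC V :=
  TensorProduct.lift
    (LinearMap.mk₂ ℝ (fun z v => z • dualExt (B v))
      (fun z w v => by simp only [add_smul])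
      (fun r z v => by simp only [smul_assoc])
      (fun z v w => by simp only [map_add, smul_add])
      (fun r z v => by simp only [map_smul]; exact smul_comm z r _))

private lemma bilinExtAux_smulC (B : V →ₗ[ℝ] V →ₗ[ℝ] ℝ) (z : ℂ) (x : Cx V) :
    bilinExtAux B (z • x) = z • bilinExtAux B x := by
  induction x using TensorProduct.induction_on with
  | zero => simp
  | tmul w v =>
      simp only [bilinExtAux, smul_tmul', lift.tmul, LinearMap.mk₂_apply, smul_eq_mul,
        mul_smul]
  | add x y hx hy => simp only [smul_add, map_add, hx, hy]

/-- The ℂ-bilinear extension of a real bilinear form `B : V × V → ℝ` to `V_ℂ`. -/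
def bilinExt (B : V →ₗ[ℝ] V →ₗ[ℝ] ℝ) : Cx V →ₗ[ℂ] DualC V where
  toFun := bilinExtAux B
  map_add' := map_add _
  map_smul' z x := by simpa using bilinExtAux_smulC B z x

/-- The `B`-transformation `e^B(X+ξ) = X + ξ + B̃(X,·)` of `𝕋_ℂV`, for a real `B`. -/
def eB (B : V →ₗ[ℝ] V →ₗ[ℝ] ℝ) : TCx V →ₗ[ℂ] TCx V where
  toFun a := (a.1, a.2 + bilinExt B a.1)
  map_add' a b := by
    simp only [Prod.fst_add, Prod.snd_add, map_add, Prod.mk_add_mk, Prod.mk.injEq]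
    exact ⟨trivial, by abel⟩
  map_smul' z a := by
    simp only [Prod.smul_fst, Prod.smul_snd, map_smul, RingHom.id_apply, Prod.smul_mk,
      Prod.mk.injEq, smul_add]

/-- The real `B`-transformation `e^B(X+α) = X + α + B(X,·)` of `𝕋V`. -/
def eBR (B : V →ₗ[ℝ] V →ₗ[ℝ] ℝ) : TR V →ₗ[ℝ] TR V where
  toFun a := (a.1, a.2 + B a.1)
  map_add' a b := by
    simp only [Prod.fst_add, Prod.snd_add, map_add, Prod.mk_add_mk, Prod.mk.injEq]
    exact ⟨trivial, by abel⟩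
  map_smul' r a := by
    simp only [Prod.smul_fst, Prod.smul_snd, map_smul, RingHom.id_apply, Prod.smul_mk,
      Prod.mk.injEq, smul_add]


/-- The range `E = pr_{V_ℂ}(L)` of a subspace of `𝕋_ℂV`. -/
def Esub (L : Submodule ℂ (TCx V)) : Submodule ℂ (Cx V) :=
  L.map (LinearMap.fst ℂ (Cx V) (DualC V))

/-- The real index `r = dim_ℂ (L ∩ L̄)`. -/
def riL (L : Submodule ℂ (TCx V)) : ℕ := finrank ℂ ↥(L ⊓ conjSub L)

/-- The real part `K = (L ∩ L̄) ∩ 𝕋V`, as a subspace of `𝕋V`. -/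
def Ksub (L : Submodule ℂ (TCx V)) : Submodule ℝ (TR V) :=
  ((L ⊓ conjSub L).restrictScalars ℝ).comap iT

/-- The distribution `D = (E + Ē) ∩ V`, as a subspace of `V`. -/
def Dsub (L : Submodule ℂ (TCx V)) : Submodule ℝ V :=
  ((Esub L ⊔ conjE (Esub L)).restrictScalars ℝ).comap iV

/-- The distribution `Δ = (E ∩ Ē) ∩ V`, as a subspace of `V`. -/
def DeltaSub (L : Submodule ℂ (TCx V)) : Submodule ℝ V :=
  ((Esub L ⊓ conjE (Esub L)).restrictScalars ℝ).comap iV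

/-- The order `s = dim V - dim D`. -/
def orderL (L : Submodule ℂ (TCx V)) : ℕ := finrank ℝ V - finrank ℝ ↥(Dsub L)

/-- The (normalized) type `k = dim_ℂ(E + Ē) - dim_ℂ E`. -/
def typeL (L : Submodule ℂ (TCx V)) : ℕ :=
  finrank ℂ ↥(Esub L ⊔ conjE (Esub L)) - finrank ℂ ↥(Esub L)

@[simp] lemma conjCx_tmul (z : ℂ) (v : V) : conjCx (z ⊗ₜ[ℝ] v) = starRingEnd ℂ z ⊗ₜ[ℝ] v := by
  simp [conjCx, Complex.conjAe_coe]

@[simp] lemma dualExt_tmul (α : V →ₗ[ℝ] ℝ) (z : ℂ) (v : V) :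
    dualExt α (z ⊗ₜ[ℝ] v) = z * α v :=
  dualExtFun_tmul α z v

lemma conjDual_apply (ξ : DualC V) (x : Cx V) :
    conjDual ξ x = starRingEnd ℂ (ξ (conjCx x)) := rfl

lemma conjDual_dualExt (α : V →ₗ[ℝ] ℝ) : conjDual (dualExt α) = dualExt α := by
  ext
  simp [conjDual_apply]

section BilinExt

variable (B : V →ₗ[ℝ] V →ₗ[ℝ] ℝ)

@[simp] lemma bilinExt_tmul (z : ℂ) (v : V) : bilinExt B (z ⊗ₜ[ℝ] v) = z • dualExt (B v) := by
  simp [bilinExt, bilinExtAux]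

lemma bilinExt_neg : bilinExt (-B) = -bilinExt B := by
  ext
  simp

lemma conjDual_bilinExt (x : Cx V) : conjDual (bilinExt B x) = bilinExt B (conjCx x) := by
  induction x using TensorProduct.induction_on with
  | zero => simp
  | tmul z v => simp [map_smulₛₗ, conjDual_dualExt]
  | add x y hx hy => simp only [map_add, hx, hy]

lemma im_bilinExt_iV (u v : V) : (bilinExt B (iV u) (iV v)).im = 0 := by
  simp [iV]

variable {B} in
lemma flip_bilinExt (hB : B.IsAlt) : (bilinExt B).flip = -bilinExt B := by
  ext u v
  simp [← hB.neg u v]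

end BilinExt

section Transport

variable {f : TCx V →ₗ[ℂ] TCx V}

lemma Esub_map (hf : ∀ a, (f a).1 = a.1) (L : Submodule ℂ (TCx V)) :
    Esub (L.map f) = Esub L := by
  ext x
  simp only [Esub, Submodule.mem_map, exists_exists_and_eq_and, LinearMap.fst_apply, hf]

lemma conjSub_map (hf : ∀ a, conjT (f a) = f (conjT a)) (L : Submodule ℂ (TCx V)) :
    conjSub (L.map f) = (conjSub L).map f := by
  ext x
  simp only [conjSub, Submodule.mem_map, exists_exists_and_eq_and, hf]

variable (e : TCx V ≃ₗ[ℂ] TCx V)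

lemma orthC_map (he : ∀ a b, pairC (e a) (e b) = pairC a b) (L : Submodule ℂ (TCx V)) :
    orthC (L.map e.toLinearMap) = (orthC L).map e.toLinearMap := by
  ext a
  rw [Submodule.mem_map_equiv]
  refine ⟨fun ha b hb => ?_, fun ha b hb => ?_⟩
  · rw [← he, e.apply_symm_apply]
    exact ha _ (Submodule.mem_map_of_mem hb)
  · obtain ⟨b, hb, rfl⟩ := hb
    rw [LinearEquiv.coe_coe, ← e.apply_symm_apply a, he]
    exact ha b hb

lemma IsLagrangianC.map (he : ∀ a b, pairC (e a) (e b) = pairC a b) {L : Submodule ℂ (TCx V)}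
    (hL : IsLagrangianC L) : IsLagrangianC (L.map e.toLinearMap) := by
  rw [IsLagrangianC, orthC_map e he, ← hL]

variable {e}

lemma inf_conjSub_map (he : ∀ a, conjT (e a) = e (conjT a)) (L : Submodule ℂ (TCx V)) :
    L.map e.toLinearMap ⊓ conjSub (L.map e.toLinearMap) = (L ⊓ conjSub L).map e.toLinearMap := by
  rw [conjSub_map he, Submodule.map_inf _ e.injective]

lemma riL_map (he : ∀ a, conjT (e a) = e (conjT a)) (L : Submodule ℂ (TCx V)) :
    riL (L.map e.toLinearMap) = riL L := by
  rw [riL, inf_conjSub_map he]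
  exact e.finrank_map_eq _

end Transport

section BTransform

variable (B : V →ₗ[ℝ] V →ₗ[ℝ] ℝ)

lemma conjT_apply (a : TCx V) : conjT a = (conjCx a.1, conjDual a.2) := rfl

lemma iT_apply (a : TR V) : iT a = (iV a.1, dualExt a.2) := rfl

lemma eB_apply (a : TCx V) : eB B a = (a.1, a.2 + bilinExt B a.1) := rfl

lemma eBR_apply (a : TR V) : eBR B a = (a.1, a.2 + B a.1) := rfl

def eBEquiv : TCx V ≃ₗ[ℂ] TCx V :=
  LinearEquiv.ofLinearMap (eB B) (eB (-B))
    (LinearMap.ext fun a => by simp [eB_apply, bilinExt_neg])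
    (LinearMap.ext fun a => by simp [eB_apply, bilinExt_neg])

lemma eBEquiv_symm_apply (a : TCx V) : (eBEquiv B).symm a = eB (-B) a := rfl

def eBREquiv : TR V ≃ₗ[ℝ] TR V :=
  LinearEquiv.ofLinearMap (eBR B) (eBR (-B))
    (LinearMap.ext fun a => by simp [eBR_apply])
    (LinearMap.ext fun a => by simp [eBR_apply])

lemma eBREquiv_symm_apply (a : TR V) : (eBREquiv B).symm a = eBR (-B) a := rfl

variable {B} in
lemma pairC_eB (hB : B.IsAlt) (a b : TCx V) : pairC (eB B a) (eB B b) = pairC a b := by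
  have hskew := LinearMap.congr_fun₂ (flip_bilinExt hB) a.1 b.1
  simp only [LinearMap.flip_apply, LinearMap.neg_apply] at hskew
  simp only [pairC, eB_apply, LinearMap.add_apply]
  linear_combination hskew / 2

lemma conjT_eB (a : TCx V) : conjT (eB B a) = eB B (conjT a) := by
  simp [conjT_apply, eB_apply, conjDual_bilinExt]

lemma iT_eBR (a : TR V) : iT (eBR B a) = eB B (iT a) := by
  simp [iT_apply, eB_apply, eBR_apply, iV]

lemma Ksub_map_eB (L : Submodule ℂ (TCx V)) : Ksub (L.map (eB B)) = (Ksub L).map (eBR B) := by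
  ext x
  change iT x ∈ L.map (eBEquiv B).toLinearMap ⊓ conjSub (L.map (eBEquiv B).toLinearMap) ↔
    x ∈ (Ksub L).map (eBREquiv B).toLinearMap
  rw [inf_conjSub_map (conjT_eB B), Submodule.mem_map_equiv, Submodule.mem_map_equiv,
    eBEquiv_symm_apply, eBREquiv_symm_apply, ← iT_eBR]
  rfl

lemma mem_map_eB (L : Submodule ℂ (TCx V)) (a : TCx V) :
    a ∈ L.map (eB B) ↔ (a.1, a.2 - bilinExt B a.1) ∈ L := by
  change a ∈ L.map (eBEquiv B).toLinearMap ↔ _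
  rw [Submodule.mem_map_equiv, eBEquiv_symm_apply, eB_apply, bilinExt_neg, sub_eq_add_neg]
  rfl

lemma mem_map_eB_iff_of_mem_iff {L : Submodule ℂ (TCx V)} {E : Submodule ℂ (Cx V)}
    {ε : E →ₗ[ℂ] E →ₗ[ℂ] ℂ} (hL : ∀ a : TCx V, a ∈ L ↔ ∃ h : a.1 ∈ E, ∀ y : E, a.2 y = ε ⟨a.1, h⟩ y)
    (a : TCx V) :
    a ∈ L.map (eB B) ↔ ∃ h : a.1 ∈ E, ∀ y : E, a.2 y = ε ⟨a.1, h⟩ y + bilinExt B a.1 y := by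
  rw [mem_map_eB, hL]
  simp only [LinearMap.sub_apply, sub_eq_iff_eq_add]

end BTransform

end CDirac

open CDirac Module

theorem stmt11_general (V : Type*) [AddCommGroup V] [Module ℝ V]
    (B : V →ₗ[ℝ] V →ₗ[ℝ] ℝ) (hBalt : ∀ v : V, B v v = 0) :
    (∀ a b : TCx V, pairC (eB B a) (eB B b) = pairC a b) ∧
    (∀ a : TCx V, conjT (eB B a) = eB B (conjT a)) ∧
    (∀ u v : V, (bilinExt B (iV u) (iV v)).im = 0) ∧
    ∀ L : Submodule ℂ (TCx V), IsLagrangianC L →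
      (IsLagrangianC (L.map (eB B)) ∧
       Esub (L.map (eB B)) = Esub L ∧
       Ksub (L.map (eB B)) = (Ksub L).map (eBR B) ∧
       riL (L.map (eB B)) = riL L ∧
       orderL (L.map (eB B)) = orderL L ∧
       typeL (L.map (eB B)) = typeL L ∧
       ∀ (E : Submodule ℂ (Cx V)), E = Esub L →
         ∀ ε : ↥E →ₗ[ℂ] ↥E →ₗ[ℂ] ℂ,
         (∀ a : TCx V, a ∈ L ↔ ∃ h : a.1 ∈ E, ∀ y : ↥E, a.2 ↑y = ε ⟨a.1, h⟩ y) →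
         ∀ a : TCx V, a ∈ L.map (eB B) ↔
           ∃ h : a.1 ∈ E, ∀ y : ↥E, a.2 ↑y = ε ⟨a.1, h⟩ y + bilinExt B a.1 ↑y) := by
  have hpair := pairC_eB hBalt
  have hconj := conjT_eB B
  refine ⟨hpair, hconj, im_bilinExt_iV B, fun L hL => ?_⟩
  have hE : Esub (L.map (eB B)) = Esub L := Esub_map (fun _ => rfl) L
  refine ⟨hL.map (eBEquiv B) hpair, hE, Ksub_map_eB B L, riL_map (e := eBEquiv B) hconj L,
    ?_, ?_, fun E _ ε hε => mem_map_eB_iff_of_mem_iff B hε⟩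
  · rw [orderL, orderL, Dsub, Dsub, hE]
  · rw [typeL, typeL, hE]

/-- A real `B`-transformation `e^B` preserves the pairing of `𝕋_ℂV`
and commutes with conjugation; for lagrangian `L`, `e^B L` is lagrangian with the same
range `E`, real part `e^B K`, real index, order and type, and `ε(e^B L) = ε(L) + B̃|_E`,
while `B̃` is real (so `Im ε|_{Δ×Δ}` is unchanged). -/
theorem stmt11 (V : Type*) [AddCommGroup V] [Module ℝ V] [FiniteDimensional ℝ V]
    (B : V →ₗ[ℝ] V →ₗ[ℝ] ℝ) (hBalt : ∀ v : V, B v v = 0) :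
    (∀ a b : TCx V, pairC (eB B a) (eB B b) = pairC a b) ∧
    (∀ a : TCx V, conjT (eB B a) = eB B (conjT a)) ∧
    (∀ u v : V, (bilinExt B (iV u) (iV v)).im = 0) ∧
    ∀ L : Submodule ℂ (TCx V), IsLagrangianC L →
      (IsLagrangianC (L.map (eB B)) ∧
       Esub (L.map (eB B)) = Esub L ∧
       Ksub (L.map (eB B)) = (Ksub L).map (eBR B) ∧
       riL (L.map (eB B)) = riL L ∧
       orderL (L.map (eB B)) = orderL L ∧
       typeL (L.map (eB B)) = typeL L ∧
       ∀ (E : Submodule ℂ (Cx V)), E = Esub L →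
         ∀ ε : ↥E →ₗ[ℂ] ↥E →ₗ[ℂ] ℂ,
         (∀ a : TCx V, a ∈ L ↔ ∃ h : a.1 ∈ E, ∀ y : ↥E, a.2 ↑y = ε ⟨a.1, h⟩ y) →
         ∀ a : TCx V, a ∈ L.map (eB B) ↔
           ∃ h : a.1 ∈ E, ∀ y : ↥E, a.2 ↑y = ε ⟨a.1, h⟩ y + bilinExt B a.1 ↑y) :=
  stmt11_general V B hBalt
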